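/- (Discounted BSDE existence, uniqueness and approximation) Let α > 0 and let the driver f : Ω × ℕ × ℝ^N → ℝ (independent of y) be adapted and satisfy: f is Lipschitz in z with constant L; f satisfies the comparison condition (for any t, z, z' and atom F ∈ F_t, f(ω,t,z) − f(ω,t,z') > min_{i∈J_t^F}{(z−z')ᵀ(e_i − E[X_{t+1}|F_t])} on F unless that minimum is 0, in which case equality holds); and |f(ω,t,0)| ≤ C for some C > 0 uniformly in (ω,t). Then there exists an adapted solution (Y,Z) of the infinite-horizon discounted BSDE Y_T = Y_t − Σ_{t≤u<T}(f(ω,u,Z_u) − αY_u) + Σ_{t≤u<T} Z_uᵀM_{u+1}, holding a.s. for all 0 ≤ t < T < ∞, with |Y_t| ≤ C/α for all t; this solution is unique among bounded adapted solutions (up to indistinguishability for Y and ∼_M for Z). Furthermore, if (Y^T,Z^T) denotes the unique adapted solution of the finite horizon BSDE 0 = Y^T_t − Σ_{t≤u<T}(f(ω,u,Z^T_u) − αY^T_u) + Σ_{t≤u<T}(Z^T_u)ᵀM_{u+1}, then Y^T_t → Y_t in L^∞ as T → ∞, uniformly on finite sets in t. -/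

import Mathlib

open MeasureTheory Finset Filter

noncomputable section

namespace DiscreteEBSDE

variable {Ω : Type*} {mΩ : MeasurableSpace Ω} {N : ℕ}

/-- The standard basis vector `e i` of `ℝ^N`. -/
def e (N : ℕ) (i : Fin N) : Fin N → ℝ := Pi.single i 1

/-- The Euclidean inner product on `ℝ^N`. -/
def dotR {N : ℕ} (z w : Fin N → ℝ) : ℝ := ∑ i, z i * w i

/-- The process `X` takes values in the standard basis of `ℝ^N`. -/
def BasisValued (X : ℕ → Ω → (Fin N → ℝ)) : Prop := ∀ t ω, ∃ i, X t ω = e N i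

/-- The σ-algebra generated by `X 0, …, X t`. -/
def natSigma (X : ℕ → Ω → (Fin N → ℝ)) (t : ℕ) : MeasurableSpace Ω :=
  ⨆ s ∈ Set.Iic t, MeasurableSpace.comap (X s) inferInstance

/-- `F` is the `P`-completion of the natural filtration of `X`:
a set is `F t`-measurable iff it agrees with a set of the natural σ-algebra up to a
`P`-null symmetric difference. -/
def IsCompletedNaturalFiltration (P : Measure Ω) (X : ℕ → Ω → (Fin N → ℝ))
    (F : Filtration ℕ mΩ) : Prop :=
  ∀ (t : ℕ) (A : Set Ω), MeasurableSet[F t] A ↔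
    ∃ B : Set Ω, MeasurableSet[natSigma X t] B ∧ P (symmDiff A B) = 0

/-- The martingale difference `M (t+1) = X (t+1) - E[X (t+1) | F t]` (componentwise). -/
def Mdiff (P : Measure Ω) (F : Filtration ℕ mΩ) (X : ℕ → Ω → (Fin N → ℝ)) (t : ℕ)
    (ω : Ω) : Fin N → ℝ :=
  fun i => X (t + 1) ω i - (P[(fun ω' => X (t + 1) ω' i)|F t]) ω

/-- The conditional second moment `‖Z‖²_{M_{t+1}} = E[(Zᵀ M_{t+1})² | F t]`. -/
def seminormSq (P : Measure Ω) (F : Filtration ℕ mΩ) (X : ℕ → Ω → (Fin N → ℝ))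
    (t : ℕ) (Z : Ω → Fin N → ℝ) : Ω → ℝ :=
  P[(fun ω => (dotR (Z ω) (Mdiff P F X t ω)) ^ 2)|F t]

/-- The stochastic seminorm `‖Z‖_{M_{t+1}}`. -/
def mSeminorm (P : Measure Ω) (F : Filtration ℕ mΩ) (X : ℕ → Ω → (Fin N → ℝ))
    (t : ℕ) (Z : Ω → Fin N → ℝ) (ω : Ω) : ℝ :=
  Real.sqrt (seminormSq P F X t Z ω)

/-- `Z ∼_{M_{t+1}} Z'`, i.e. `‖Z - Z'‖_{M_{t+1}} = 0` a.s. -/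
def equivMt (P : Measure Ω) (F : Filtration ℕ mΩ) (X : ℕ → Ω → (Fin N → ℝ)) (t : ℕ)
    (Z Z' : Ω → Fin N → ℝ) : Prop :=
  seminormSq P F X t (fun ω => Z ω - Z' ω) =ᵐ[P] 0

/-- `Z ∼_M Z'`. -/
def equivM (P : Measure Ω) (F : Filtration ℕ mΩ) (X : ℕ → Ω → (Fin N → ℝ))
    (Z Z' : ℕ → Ω → Fin N → ℝ) : Prop :=
  ∀ t, equivMt P F X t (Z t) (Z' t)

/-- A driver `f(ω,t,y,z)` is adapted if `(ω,y,z) ↦ f(ω,t,y,z)` is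
`F t ⊗ B(ℝ) ⊗ B(ℝ^N)`-measurable for every `t`. -/
def DriverAdapted (F : Filtration ℕ mΩ) (f : Ω → ℕ → ℝ → (Fin N → ℝ) → ℝ) : Prop :=
  ∀ t : ℕ, Measurable[(F t).prod inferInstance]
    fun p : Ω × (ℝ × (Fin N → ℝ)) => f p.1 t p.2.1 p.2.2

/-- A column-stochastic transition matrix. -/
def IsTransMat {n : ℕ} (A : Matrix (Fin n) (Fin n) ℝ) : Prop :=
  (∀ i j, 0 ≤ A i j) ∧ ∀ j, ∑ i, A i j = 1

/-- `X` is a Markov chain with transition matrices `A t`; since `X` is valued in the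
standard basis this is equivalent to `E[X (t+1) | F t] = (A t) (X t)` a.s. -/
def IsMarkovChain (P : Measure Ω) (F : Filtration ℕ mΩ) (X : ℕ → Ω → (Fin N → ℝ))
    (A : ℕ → Matrix (Fin N) (Fin N) ℝ) : Prop :=
  (∀ t, IsTransMat (A t)) ∧
    ∀ (t : ℕ) (i : Fin N),
      (P[(fun ω => X (t + 1) ω i)|F t]) =ᵐ[P] fun ω => (A t).mulVec (X t ω) i

/-- The atom of `F t` containing `ω₀` (the set of paths agreeing with `ω₀` up to time `t`). -/
def pathAtom (X : ℕ → Ω → (Fin N → ℝ)) (t : ℕ) (ω₀ : Ω) : Set Ω :=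
  {ω' | ∀ s ≤ t, X s ω' = X s ω₀}

/-- `min_{i ∈ J_t^F} (z - z')ᵀ(e_i - E[X_{t+1} | F_t])` where `F` is the atom of `ω₀`
 at time `t` and `J_t^F = {i : P(X_{t+1} = e_i | F) > 0}`. -/
def minJump (P : Measure Ω) (F : Filtration ℕ mΩ) (X : ℕ → Ω → (Fin N → ℝ))
    (t : ℕ) (ω₀ : Ω) (z z' : Fin N → ℝ) (ω : Ω) : ℝ :=
  sInf {r : ℝ | ∃ i : Fin N,
    0 < P ({ω' | X (t + 1) ω' = e N i} ∩ pathAtom X t ω₀) ∧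
    r = dotR (z - z') (fun j => e N i j - (P[(fun ω'' => X (t + 1) ω'' j)|F t]) ω)}

/-- The comparison condition of the change-of-measure proposition: on every atom `F` of
`F t`, `f(ω,t,y,z) - f(ω,t,y,z') > min_{i ∈ J_t^F}{(z-z')ᵀ(e_i - E[X_{t+1}|F_t])}`, unless
this minimum is `0`, in which case equality holds. -/
def ComparisonCondition (P : Measure Ω) (F : Filtration ℕ mΩ) (X : ℕ → Ω → (Fin N → ℝ))
    (f : Ω → ℕ → ℝ → (Fin N → ℝ) → ℝ) : Prop :=
  ∀ (t : ℕ) (y : ℝ) (z z' : Fin N → ℝ) (ω₀ : Ω), 0 < P (pathAtom X t ω₀) →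
    ∀ᵐ ω ∂P, ω ∈ pathAtom X t ω₀ →
      (minJump P F X t ω₀ z z' ω = 0 → f ω t y z - f ω t y z' = 0) ∧
      (minJump P F X t ω₀ z z' ω ≠ 0 →
        minJump P F X t ω₀ z z' ω < f ω t y z - f ω t y z')

/-- `f` is Lipschitz in `z` with constant `L`, w.r.t. the stochastic seminorm. -/
def DriverLipschitzNoY (P : Measure Ω) (F : Filtration ℕ mΩ) (X : ℕ → Ω → (Fin N → ℝ))
    (L : ℝ) (f : Ω → ℕ → (Fin N → ℝ) → ℝ) : Prop :=
  ∀ (t : ℕ) (Zt Z't : Ω → Fin N → ℝ),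
    StronglyMeasurable[F t] Zt → StronglyMeasurable[F t] Z't →
    ∀ᵐ ω ∂P, |f ω t (Zt ω) - f ω t (Z't ω)| ≤
      L * mSeminorm P F X t (fun ω' => Zt ω' - Z't ω') ω

/-- `(Y,Z)` is an adapted solution of the finite horizon BSDE with driver `f`,
horizon `T` and terminal condition `ξ`. -/
def SolvesFiniteBSDE (P : Measure Ω) (F : Filtration ℕ mΩ) (X : ℕ → Ω → (Fin N → ℝ))
    (f : Ω → ℕ → ℝ → (Fin N → ℝ) → ℝ) (T : ℕ) (ξ : Ω → ℝ)
    (Y : ℕ → Ω → ℝ) (Z : ℕ → Ω → Fin N → ℝ) : Prop :=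
  Adapted F Y ∧ Adapted F Z ∧
    ∀ t ≤ T, ∀ᵐ ω ∂P,
      Y t ω - ∑ u ∈ Finset.Ico t T, f ω u (Y u ω) (Z u ω) +
        ∑ u ∈ Finset.Ico t T, dotR (Z u ω) (Mdiff P F X u ω) = ξ ω

/-- `(Y,Z)` is an adapted solution of the infinite-horizon discounted BSDE
with discount rate `α` and driver `f` (independent of `y`). -/
def SolvesDiscountedBSDE (P : Measure Ω) (F : Filtration ℕ mΩ) (X : ℕ → Ω → (Fin N → ℝ))
    (α : ℝ) (f : Ω → ℕ → (Fin N → ℝ) → ℝ)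
    (Y : ℕ → Ω → ℝ) (Z : ℕ → Ω → Fin N → ℝ) : Prop :=
  Adapted F Y ∧ Adapted F Z ∧
    ∀ t T : ℕ, t < T → ∀ᵐ ω ∂P,
      Y T ω = Y t ω - ∑ u ∈ Finset.Ico t T, (f ω u (Z u ω) - α * Y u ω) +
        ∑ u ∈ Finset.Ico t T, dotR (Z u ω) (Mdiff P F X u ω)

/-- `(Y,Z,lam)` solves the Ergodic BSDE with Markovian driver `f`. -/
def SolvesEBSDE (P : Measure Ω) (F : Filtration ℕ mΩ) (X : ℕ → Ω → (Fin N → ℝ))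
    (f : (Fin N → ℝ) → (Fin N → ℝ) → ℝ) (Y : ℕ → Ω → ℝ) (Z : ℕ → Ω → Fin N → ℝ)
    (lam : ℝ) : Prop :=
  ∀ t T : ℕ, t < T → ∀ᵐ ω ∂P,
    Y T ω = Y t ω - ∑ u ∈ Finset.Ico t T, (f (X u ω) (Z u ω) - lam) +
      ∑ u ∈ Finset.Ico t T, dotR (Z u ω) (Mdiff P F X u ω)

/-- Ratio with the convention `0/0 := 1`. -/
def balRatio (a b : ℝ) : ℝ := if a = 0 ∧ b = 0 then 1 else a / b

/-- The driver `f(ω,t,y,z)` is `γ`-balanced. -/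
def IsGammaBalanced (P : Measure Ω) (F : Filtration ℕ mΩ) (X : ℕ → Ω → (Fin N → ℝ))
    (A : ℕ → Matrix (Fin N) (Fin N) ℝ) (γ : ℝ)
    (f : Ω → ℕ → ℝ → (Fin N → ℝ) → ℝ) : Prop :=
  ∃ ψ : Ω → ℕ → (Fin N → ℝ) → (Fin N → ℝ) → (Fin N → ℝ),
    (∀ t : ℕ, Measurable[(F t).prod inferInstance]
      fun p : Ω × ((Fin N → ℝ) × (Fin N → ℝ)) => ψ p.1 t p.2.1 p.2.2) ∧
    ∀ (t : ℕ) (y : ℝ) (z z' : Fin N → ℝ), ∀ᵐ ω ∂P,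
      f ω t y z - f ω t y z' =
          dotR (z - z') (fun i => ψ ω t z z' i - (A t).mulVec (X t ω) i) ∧
        (∀ i, balRatio (ψ ω t z z' i) ((A t).mulVec (X t ω) i) ∈ Set.Icc γ γ⁻¹) ∧
        ∑ i, ψ ω t z z' i = 1

/-- The driver `f(ω,t,z)` (independent of `y`) is `γ`-balanced. -/
def IsGammaBalancedNoY (P : Measure Ω) (F : Filtration ℕ mΩ) (X : ℕ → Ω → (Fin N → ℝ))
    (A : ℕ → Matrix (Fin N) (Fin N) ℝ) (γ : ℝ)
    (f : Ω → ℕ → (Fin N → ℝ) → ℝ) : Prop :=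
  ∃ ψ : Ω → ℕ → (Fin N → ℝ) → (Fin N → ℝ) → (Fin N → ℝ),
    (∀ t : ℕ, Measurable[(F t).prod inferInstance]
      fun p : Ω × ((Fin N → ℝ) × (Fin N → ℝ)) => ψ p.1 t p.2.1 p.2.2) ∧
    ∀ (t : ℕ) (z z' : Fin N → ℝ), ∀ᵐ ω ∂P,
      f ω t z - f ω t z' =
          dotR (z - z') (fun i => ψ ω t z z' i - (A t).mulVec (X t ω) i) ∧
        (∀ i, balRatio (ψ ω t z z' i) ((A t).mulVec (X t ω) i) ∈ Set.Icc γ γ⁻¹) ∧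
        ∑ i, ψ ω t z z' i = 1

/-- A probability vector on `Fin n`. -/
def IsProbVec {n : ℕ} (μ : Fin n → ℝ) : Prop := (∀ i, 0 ≤ μ i) ∧ ∑ i, μ i = 1

/-- Total variation distance between (signed) measures on a finite state space. -/
def tvDist {n : ℕ} (μ ν : Fin n → ℝ) : ℝ := (∑ x, |μ x - ν x|) / 2

/-- Uniform ergodicity of the chain induced by the column-stochastic matrix `A`. -/
def UniformlyErgodic {n : ℕ} (A : Matrix (Fin n) (Fin n) ℝ) : Prop :=
  ∃ π : Fin n → ℝ, IsProbVec π ∧ ∃ R ρ : ℝ, 0 < R ∧ 0 < ρ ∧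
    ∀ (t : ℕ) (μ : Fin n → ℝ), IsProbVec μ →
      tvDist ((A ^ t).mulVec μ) π ≤ R * Real.exp (-ρ * t)

/-!
An `F t`-measurable quantity is a.s. constant on every atom of `F t` (the paths of positive
probability that agree up to time `t`), and on such an atom the increment `z ⬝ M (t + 1)` equals
`z ⬝ (e i - p)` on the transition to `e i`, where `p` is the vector of transition probabilities
out of the atom. Reading the comparison condition along the two transitions that realise the
smallest jumps of `± (z - z') ⬝ M` shows that the backward step `Y (t + 1) ↦ Y t` of the
discounted equation is a contraction of ratio `1 / (1 + α)` in `L^∞`, uniformly in `Z`.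
Consequently the finite-horizon solutions satisfy `|Y^T' t - Y^T t| ≤ (C / α) (1 + α)^(t - T)`
for `t ≤ T ≤ T'`, their limit `Y` solves the one-step equation with `Z` read off from the
martingale representation of `Y (t + 1)`, and iterating the contraction gives uniqueness.
-/

section RealSequences

lemma tendsto_div_pow_atTop_zero {α : ℝ} (hα : 0 < α) (D : ℝ) :
    Tendsto (fun k : ℕ => D / (1 + α) ^ k) atTop (nhds 0) :=
  (tendsto_pow_atTop_atTop_of_one_lt (by linarith)).const_div_atTop D

lemma div_pow_le_div_pow {α D : ℝ} (hα : 0 ≤ α) (hD : 0 ≤ D) {m n : ℕ} (h : m ≤ n) :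
    D / (1 + α) ^ n ≤ D / (1 + α) ^ m :=
  div_le_div_of_nonneg_left hD (by positivity) (pow_le_pow_right₀ (by linarith) h)

lemma eq_of_eventually_abs_sub_le {x y : ℝ} {b : ℕ → ℝ} (hb : Tendsto b atTop (nhds 0))
    (h : ∀ᶠ k in atTop, |x - y| ≤ b k) : x = y :=
  sub_eq_zero.1 (abs_nonpos_iff.1 (ge_of_tendsto hb h))

lemma abs_sub_limUnder_le {a b : ℕ → ℝ} {t : ℕ}
    (h : ∀ T T', t ≤ T → T ≤ T' → |a T' - a T| ≤ b T) (hb : Tendsto b atTop (nhds 0)) {T : ℕ}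
    (hT : t ≤ T) : |a T - limUnder atTop a| ≤ b T := by
  have hcauchy : CauchySeq a := Metric.cauchySeq_iff'.2 fun ε hε => by
    obtain ⟨T, hT, hbT⟩ := ((eventually_ge_atTop t).and (hb.eventually (gt_mem_nhds hε))).exists
    exact ⟨T, fun T' hT' => (h T T' hT hT').trans_lt hbT⟩
  rw [abs_sub_comm]
  exact le_of_tendsto ((hcauchy.tendsto_limUnder.sub_const (a T)).abs)
    (eventually_atTop.2 ⟨T, fun T' hT' => h T T' hT hT'⟩)

end RealSequences

lemma e_inj {N : ℕ} {i j : Fin N} : e N i = e N j ↔ i = j :=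
  ⟨fun h => by simpa [e, Pi.single_apply, eq_comm] using congrFun h j, fun h => h ▸ rfl⟩

lemma dotR_eq_dotProduct {N : ℕ} (z w : Fin N → ℝ) : dotR z w = z ⬝ᵥ w := rfl

lemma sum_mul_dotR_e_sub_eq_zero {N : ℕ} {p : Fin N → ℝ} (hp : ∑ i, p i = 1)
    (w : Fin N → ℝ) : ∑ i, p i * dotR w (e N i - p) = 0 := by
  simp only [dotR_eq_dotProduct, dotProduct_sub, e, dotProduct_single, mul_one, mul_sub,
    Finset.sum_sub_distrib, ← Finset.sum_mul, hp, one_mul]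
  rw [dotProduct_comm, dotProduct, sub_self]

lemma ae_forall_mem_imp_measure_pos {ι : Type*} [Countable ι] (μ : Measure Ω)
    (s : ι → Set Ω) : ∀ᵐ ω ∂μ, ∀ i, ω ∈ s i → 0 < μ (s i) := by
  refine ae_all_iff.2 fun i => ?_
  rcases eq_zero_or_pos (μ (s i)) with h0 | hpos
  · exact (measure_eq_zero_iff_ae_notMem.1 h0).mono fun ω h hmem => absurd hmem h
  · exact Eventually.of_forall fun _ _ => hpos

section Development

variable {P : Measure Ω} {F : Filtration ℕ mΩ} {X : ℕ → Ω → (Fin N → ℝ)} {α : ℝ}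
  {f : Ω → ℕ → (Fin N → ℝ) → ℝ} {t : ℕ}

lemma mem_pathAtom_self (t : ℕ) (ω : Ω) : ω ∈ pathAtom X t ω := fun _ _ => rfl

lemma mem_pathAtom_comm {ω ω' : Ω} : ω' ∈ pathAtom X t ω ↔ ω ∈ pathAtom X t ω' :=
  ⟨fun h s hs => (h s hs).symm, fun h s hs => (h s hs).symm⟩

lemma measurableSet_natSigma_pathAtom (t : ℕ) (ω₀ : Ω) :
    MeasurableSet[natSigma X t] (pathAtom X t ω₀) := by
  have h : pathAtom X t ω₀ = ⋂ s ∈ Set.Iic t, X s ⁻¹' {X s ω₀} := by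
    ext ω; simp [pathAtom]
  rw [h]
  refine MeasurableSet.biInter (Set.to_countable _) fun s hs => ?_
  exact le_biSup (fun s => MeasurableSpace.comap (X s) inferInstance) hs _
    ⟨{X s ω₀}, measurableSet_singleton _, rfl⟩

lemma pathAtom_subset_of_measurableSet_natSigma {B : Set Ω}
    (hB : MeasurableSet[natSigma X t] B) {ω : Ω} (hω : ω ∈ B) : pathAtom X t ω ⊆ B := by
  -- the sets saturated by path atoms form a σ-algebra containing the generators
  let saturated : MeasurableSpace Ω :=
    { MeasurableSet' := fun B => ∀ ω ∈ B, pathAtom X t ω ⊆ B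
      measurableSet_empty := by simp
      measurableSet_compl := fun B hB ω hω ω' hω' hmem =>
        hω (hB ω' hmem (mem_pathAtom_comm.1 hω'))
      measurableSet_iUnion := fun s hs ω hω => by
        obtain ⟨i, hi⟩ := Set.mem_iUnion.1 hω
        exact (hs i ω hi).trans (Set.subset_iUnion s i) }
  have hle : natSigma X t ≤ saturated := by
    refine iSup₂_le fun s hs => ?_
    rintro _ ⟨E, -, rfl⟩ ω hω ω' hω'
    simpa [Set.mem_preimage, hω' s hs] using hω
  exact hle B hB ω hω

lemma natSigma_le (hF : IsCompletedNaturalFiltration P X F) (t : ℕ) : natSigma X t ≤ F t :=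
  fun B hB => (hF t B).2 ⟨B, hB, by simp⟩

lemma measurableSet_pathAtom (hF : IsCompletedNaturalFiltration P X F) (t : ℕ) (ω₀ : Ω) :
    MeasurableSet (pathAtom X t ω₀) :=
  F.le t _ (natSigma_le hF t _ (measurableSet_natSigma_pathAtom t ω₀))

lemma measurable_X (hF : IsCompletedNaturalFiltration P X F) {s t : ℕ} (hst : s ≤ t) :
    Measurable[F t] (X s) := fun E hE =>
  natSigma_le hF t _ (le_biSup (fun s => MeasurableSpace.comap (X s) inferInstance) (i := s) hst _
    ⟨E, hE, rfl⟩)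

lemma exists_ae_mem_iff_on_pathAtom (hF : IsCompletedNaturalFiltration P X F)
    {S : Set Ω} (hS : MeasurableSet[F t] S) (ω₀ : Ω) :
    ∃ b : Prop, ∀ᵐ ω ∂P.restrict (pathAtom X t ω₀), (ω ∈ S ↔ b) := by
  obtain ⟨B, hB, hSB⟩ := (hF t S).1 hS
  refine ⟨ω₀ ∈ B, ?_⟩
  filter_upwards [ae_restrict_of_ae (measure_symmDiff_eq_zero_iff.1 hSB),
    ae_restrict_mem (measurableSet_pathAtom hF t ω₀)] with ω hω hmem
  rw [show (ω ∈ S) = (ω ∈ B) from hω]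
  exact ⟨fun h => pathAtom_subset_of_measurableSet_natSigma hB h (mem_pathAtom_comm.1 hmem),
    fun h => pathAtom_subset_of_measurableSet_natSigma hB h hmem⟩

lemma exists_ae_eq_const_on_pathAtom (hF : IsCompletedNaturalFiltration P X F)
    {g : Ω → ℝ} (hg : Measurable[F t] g) (ω₀ : Ω) :
    ∃ c : ℝ, ∀ᵐ ω ∂P.restrict (pathAtom X t ω₀), g ω = c := by
  choose b hb using fun q : ℚ => exists_ae_mem_iff_on_pathAtom hF (hg measurableSet_Iic) ω₀
  have hall := ae_all_iff.2 hb
  rcases eq_or_ne (P (pathAtom X t ω₀)) 0 with h0 | h0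
  · exact ⟨0, by simp [Measure.restrict_eq_zero.2 h0]⟩
  obtain ⟨ω₁, -, hω₁⟩ := Measure.exists_mem_of_measure_ne_zero_of_ae h0 hall
  refine ⟨g ω₁, hall.mono fun ω hω => le_antisymm ?_ ?_⟩
  -- `g ω` and `g ω₁` lie below the same rationals
  · exact le_of_forall_lt_rat_imp_le fun q hq => ((hω q).2 ((hω₁ q).1 hq.le) :)
  · exact le_of_forall_lt_rat_imp_le fun q hq => ((hω₁ q).2 ((hω q).1 hq.le) :)

lemma exists_ae_eq_const_vec_on_pathAtom (hF : IsCompletedNaturalFiltration P X F)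
    {Z : Ω → Fin N → ℝ} (hZ : Measurable[F t] Z) (ω₀ : Ω) :
    ∃ z : Fin N → ℝ, ∀ᵐ ω ∂P.restrict (pathAtom X t ω₀), Z ω = z := by
  choose z hz using fun i =>
    exists_ae_eq_const_on_pathAtom hF ((measurable_pi_apply i).comp hZ) ω₀
  exact ⟨z, (ae_all_iff.2 hz).mono fun ω hω => funext hω⟩

lemma ae_of_forall_ae_restrict_pathAtom (hX : BasisValued X) (t : ℕ) {Q : Ω → Prop}
    (h : ∀ ω₀, 0 < P (pathAtom X t ω₀) → ∀ᵐ ω ∂P.restrict (pathAtom X t ω₀), Q ω) :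
    ∀ᵐ ω ∂P, Q ω := by
  have hcount : (Set.range (pathAtom X t)).Countable := by
    refine (Set.finite_range fun v : Fin (t + 1) → Fin N =>
      {ω | ∀ s : Fin (t + 1), X s ω = e N (v s)}).countable.mono ?_
    rintro _ ⟨ω, rfl⟩
    choose v hv using fun s : Fin (t + 1) => hX s ω
    refine ⟨v, Set.ext fun ω' => ⟨fun h s hs => ?_, fun h s => ?_⟩⟩
    · exact (h ⟨s, Nat.lt_succ_of_le hs⟩).trans (hv ⟨s, Nat.lt_succ_of_le hs⟩).symm
    · exact (h s (Nat.lt_succ_iff.1 s.isLt)).trans (hv s)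
  have hcover : ⋃ A ∈ Set.range (pathAtom X t), A = Set.univ :=
    Set.eq_univ_of_forall fun ω => Set.mem_biUnion ⟨ω, rfl⟩ (mem_pathAtom_self t ω)
  rw [← Measure.restrict_univ (μ := P), ← hcover, ae_restrict_biUnion_iff _ hcount]
  rintro _ ⟨ω₀, rfl⟩
  rcases eq_zero_or_pos (P (pathAtom X t ω₀)) with h0 | hpos
  · simp [Measure.restrict_eq_zero.2 h0]
  · exact h ω₀ hpos

def nextEq (X : ℕ → Ω → (Fin N → ℝ)) (t : ℕ) (i : Fin N) : Set Ω := {ω | X (t + 1) ω = e N i}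

lemma measurableSet_nextEq (hF : IsCompletedNaturalFiltration P X F) (t : ℕ) (i : Fin N) :
    MeasurableSet (nextEq X t i) :=
  F.le (t + 1) _ (measurable_X hF le_rfl (measurableSet_singleton _))

lemma X_succ_apply_eq_indicator (hX : BasisValued X) (t : ℕ) (i : Fin N) :
    (fun ω => X (t + 1) ω i) = (nextEq X t i).indicator 1 := by
  ext ω
  obtain ⟨j, hj⟩ := hX (t + 1) ω
  simp only [Set.indicator_apply, nextEq, Set.mem_ofPred_eq, hj, e_inj, Pi.one_apply]
  simp [e, Pi.single_apply, eq_comm]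

lemma sum_indicator_nextEq (hX : BasisValued X) (g : Ω → ℝ) (ω : Ω) :
    ∑ i, (nextEq X t i).indicator g ω = g ω := by
  obtain ⟨j, hj⟩ := hX (t + 1) ω
  rw [Finset.sum_eq_single j (fun i _ hij => Set.indicator_of_notMem
    (fun h => hij (e_inj.1 (h.symm.trans hj))) _) (by simp),
    Set.indicator_of_mem (show ω ∈ nextEq X t j from hj)]

lemma pathAtom_succ_of_mem {ω₀ ω : Ω} {i : Fin N} (h : ω ∈ nextEq X t i ∩ pathAtom X t ω₀) :
    pathAtom X (t + 1) ω = nextEq X t i ∩ pathAtom X t ω₀ := by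
  ext ω'
  refine ⟨fun h' => ⟨(h' (t + 1) le_rfl).trans h.1, fun s hs => (h' s (by omega)).trans (h.2 s hs)⟩,
    fun ⟨h1, h2⟩ s hs => ?_⟩
  rcases Nat.le_succ_iff.1 hs with hs | rfl
  · exact (h2 s hs).trans (h.2 s hs).symm
  · exact h1.trans h.1.symm

lemma exists_ae_eq_const_on_nextEq_inter_pathAtom (hF : IsCompletedNaturalFiltration P X F)
    {Y₁ : Ω → ℝ} (hY₁ : Measurable[F (t + 1)] Y₁) (ω₀ : Ω) (i : Fin N) :
    ∃ c : ℝ, ∀ᵐ ω ∂P.restrict (nextEq X t i ∩ pathAtom X t ω₀), Y₁ ω = c := by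
  rcases (nextEq X t i ∩ pathAtom X t ω₀).eq_empty_or_nonempty with he | ⟨ω, hω⟩
  · exact ⟨0, by simp [he]⟩
  · rw [← pathAtom_succ_of_mem hω]
    exact exists_ae_eq_const_on_pathAtom hF hY₁ ω

lemma exists_nextEq_of_ae_restrict_pathAtom {ω₀ : Ω} {i : Fin N}
    (hpos : 0 < P (nextEq X t i ∩ pathAtom X t ω₀)) {Q : Ω → Prop}
    (hQ : ∀ᵐ ω ∂P.restrict (pathAtom X t ω₀), Q ω) : ∃ ω, X (t + 1) ω = e N i ∧ Q ω := by
  obtain ⟨ω, hω, hQω⟩ := Measure.exists_mem_of_measure_ne_zero_of_ae hpos.ne'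
    (ae_restrict_of_ae_restrict_of_subset Set.inter_subset_right hQ)
  exact ⟨ω, hω.1, hQω⟩

def atomProb (P : Measure Ω) (X : ℕ → Ω → (Fin N → ℝ)) (t : ℕ) (ω₀ : Ω) : Fin N → ℝ :=
  fun i => P.real (nextEq X t i ∩ pathAtom X t ω₀) / P.real (pathAtom X t ω₀)

lemma atomProb_eq_zero {ω₀ : Ω} {i : Fin N}
    (h : P (nextEq X t i ∩ pathAtom X t ω₀) = 0) : atomProb P X t ω₀ i = 0 := by
  simp [atomProb, Measure.real, h]

/-- `E[Y₁; X (t + 1) = e i | F t] / P(X (t + 1) = e i | F t)`: the value taken by `Y₁` after a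
transition to `e i` (and `0` where that transition is impossible). -/
def repZ (P : Measure Ω) (F : Filtration ℕ mΩ) (X : ℕ → Ω → (Fin N → ℝ)) (Y₁ : Ω → ℝ)
    (t : ℕ) : Ω → Fin N → ℝ := fun ω i =>
  (P[(nextEq X t i).indicator Y₁|F t]) ω / (P[fun ω' => X (t + 1) ω' i|F t]) ω

lemma measurable_repZ (Y₁ : Ω → ℝ) :
    Measurable[F t] (repZ P F X Y₁ t) :=
  (@measurable_pi_lambda Ω (Fin N) (fun _ => ℝ) (F t) _ _ fun _ =>
    stronglyMeasurable_condExp.measurable.div stronglyMeasurable_condExp.measurable)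

lemma measurable_driver_comp
    (hfAd : ∀ t : ℕ, Measurable[(F t).prod inferInstance]
      fun p : Ω × (Fin N → ℝ) => f p.1 t p.2)
    {Z : Ω → Fin N → ℝ} (hZ : Measurable[F t] Z) :
    Measurable[F t] fun ω => f ω t (Z ω) := by
  have hpair : @Measurable Ω (Ω × (Fin N → ℝ)) (F t) ((F t).prod inferInstance)
      fun ω => (ω, Z ω) := measurable_id.prodMk hZ
  exact (hfAd t).comp hpair

def IsDiscountedStep (P : Measure Ω) (F : Filtration ℕ mΩ) (X : ℕ → Ω → (Fin N → ℝ)) (α : ℝ)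
    (f : Ω → ℕ → (Fin N → ℝ) → ℝ) (t : ℕ) (Y₀ : Ω → ℝ) (Z : Ω → Fin N → ℝ) (Y₁ : Ω → ℝ) :
    Prop :=
  ∀ᵐ ω ∂P, Y₁ ω = (1 + α) * Y₀ ω - f ω t (Z ω) + dotR (Z ω) (Mdiff P F X t ω)

lemma SolvesFiniteBSDE.isDiscountedStep {T : ℕ} {ξ : Ω → ℝ} {Y : ℕ → Ω → ℝ}
    {Z : ℕ → Ω → Fin N → ℝ}
    (h : SolvesFiniteBSDE P F X (fun ω u y z => f ω u z - α * y) T ξ Y Z) (ht : t < T) :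
    IsDiscountedStep P F X α f t (Y t) (Z t) (Y (t + 1)) := by
  filter_upwards [h.2.2 t ht.le, h.2.2 (t + 1) ht] with ω h1 h2
  rw [Finset.sum_eq_sum_Ico_succ_bot ht, Finset.sum_eq_sum_Ico_succ_bot ht
    (f := fun u => dotR (Z u ω) (Mdiff P F X u ω))] at h1
  linarith

lemma SolvesFiniteBSDE.ae_eq_terminal {T : ℕ} {ξ : Ω → ℝ} {Y : ℕ → Ω → ℝ}
    {Z : ℕ → Ω → Fin N → ℝ}
    (h : SolvesFiniteBSDE P F X (fun ω u y z => f ω u z - α * y) T ξ Y Z) : Y T =ᵐ[P] ξ := by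
  filter_upwards [h.2.2 T le_rfl] with ω h1
  simpa using h1

lemma SolvesDiscountedBSDE.isDiscountedStep {Y : ℕ → Ω → ℝ} {Z : ℕ → Ω → Fin N → ℝ}
    (h : SolvesDiscountedBSDE P F X α f Y Z) (t : ℕ) :
    IsDiscountedStep P F X α f t (Y t) (Z t) (Y (t + 1)) := by
  filter_upwards [h.2.2 t (t + 1) t.lt_succ_self] with ω h1
  simp only [Nat.Ico_succ_singleton, Finset.sum_singleton] at h1
  linarith

lemma solvesDiscountedBSDE_of_isDiscountedStep {Y : ℕ → Ω → ℝ} {Z : ℕ → Ω → Fin N → ℝ}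
    (hY : Adapted F Y) (hZ : Adapted F Z)
    (h : ∀ t, IsDiscountedStep P F X α f t (Y t) (Z t) (Y (t + 1))) :
    SolvesDiscountedBSDE P F X α f Y Z := by
  refine ⟨hY, hZ, fun t T htT => ?_⟩
  filter_upwards [ae_all_iff.2 h] with ω hω
  induction T, htT using Nat.le_induction with
  | base =>
    simp only [Nat.Ico_succ_singleton, Finset.sum_singleton, hω t]
    ring
  | succ T hT ih =>
    rw [Finset.sum_Ico_succ_top (by omega), Finset.sum_Ico_succ_top (by omega), hω T, ih]
    ring

section FiniteMeasure

variable [IsFiniteMeasure P] {C : ℝ} {YT : ℕ → ℕ → Ω → ℝ} {ZT : ℕ → ℕ → Ω → Fin N → ℝ}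

lemma condExp_ae_eq_setAverage_on_pathAtom
    (hF : IsCompletedNaturalFiltration P X F) {g : Ω → ℝ} (hg : Integrable g P)
    (ω₀ : Ω) :
    ∀ᵐ ω ∂P.restrict (pathAtom X t ω₀), (P[g|F t]) ω = ⨍ x in pathAtom X t ω₀, g x ∂P := by
  obtain ⟨c, hc⟩ := exists_ae_eq_const_on_pathAtom hF stronglyMeasurable_condExp.measurable ω₀
  rcases eq_or_ne (P (pathAtom X t ω₀)) 0 with h0 | h0
  · simp [Measure.restrict_eq_zero.2 h0]
  refine hc.mono fun ω hω => hω.trans ?_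
  calc c = ⨍ _ in pathAtom X t ω₀, c ∂P := (setAverage_const h0 (measure_ne_top _ _) c).symm
    _ = ⨍ x in pathAtom X t ω₀, (P[g|F t]) x ∂P := average_congr (hc.mono fun _ h => h.symm)
    _ = ⨍ x in pathAtom X t ω₀, g x ∂P := by
      rw [setAverage_eq, setAverage_eq,
        setIntegral_condExp (F.le t) hg (natSigma_le hF t _ (measurableSet_natSigma_pathAtom t ω₀))]

lemma sum_atomProb (hX : BasisValued X)
    (hF : IsCompletedNaturalFiltration P X F) {ω₀ : Ω}
    (hA : 0 < P (pathAtom X t ω₀)) : ∑ i, atomProb P X t ω₀ i = 1 := by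
  have hcover : ⋃ i, nextEq X t i ∩ pathAtom X t ω₀ = pathAtom X t ω₀ := by
    have hU : ⋃ i, nextEq X t i = Set.univ := Set.iUnion_eq_univ_iff.2 fun ω => hX (t + 1) ω
    rw [← Set.iUnion_inter, hU, Set.univ_inter]
  have hdisj : Pairwise (Function.onFun Disjoint fun i => nextEq X t i ∩ pathAtom X t ω₀) :=
    fun i j hij => Set.disjoint_left.2 fun ω hi hj => hij (e_inj.1 (hi.1.symm.trans hj.1))
  unfold atomProb
  rw [← Finset.sum_div, ← measureReal_iUnion_fintype hdisj
    fun i => (measurableSet_nextEq hF t i).inter (measurableSet_pathAtom hF t ω₀), hcover,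
    div_self ((measureReal_ne_zero_iff (measure_ne_top _ _)).2 hA.ne')]

lemma atomProb_pos {ω₀ : Ω} {i : Fin N} (h : 0 < P (nextEq X t i ∩ pathAtom X t ω₀)) :
    0 < atomProb P X t ω₀ i :=
  div_pos (ENNReal.toReal_pos h.ne' (measure_ne_top _ _))
    (ENNReal.toReal_pos (h.trans_le (measure_mono Set.inter_subset_right)).ne' (measure_ne_top _ _))

lemma condExp_X_succ_ae_eq_atomProb (hX : BasisValued X)
    (hF : IsCompletedNaturalFiltration P X F) (t : ℕ) (ω₀ : Ω) :
    ∀ᵐ ω ∂P.restrict (pathAtom X t ω₀),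
      ∀ i, (P[fun ω' => X (t + 1) ω' i|F t]) ω = atomProb P X t ω₀ i := by
  refine ae_all_iff.2 fun i => ?_
  have hind := X_succ_apply_eq_indicator hX t i
  have hint : Integrable (fun ω => X (t + 1) ω i) P :=
    hind ▸ (integrable_const 1).indicator (measurableSet_nextEq hF t i)
  filter_upwards [condExp_ae_eq_setAverage_on_pathAtom hF hint ω₀] with ω hω
  rw [hω, setAverage_eq, hind, integral_indicator_one (measurableSet_nextEq hF t i),
    measureReal_restrict_apply (measurableSet_nextEq hF t i), smul_eq_mul, atomProb,
    inv_mul_eq_div]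

lemma Mdiff_ae_eq_on_pathAtom (hX : BasisValued X)
    (hF : IsCompletedNaturalFiltration P X F) (t : ℕ) (ω₀ : Ω) :
    ∀ᵐ ω ∂P.restrict (pathAtom X t ω₀),
      Mdiff P F X t ω = X (t + 1) ω - atomProb P X t ω₀ := by
  filter_upwards [condExp_X_succ_ae_eq_atomProb hX hF t ω₀] with ω hω
  ext i
  simp [Mdiff, hω i]

lemma exists_jump_le_driver_sub (hX : BasisValued X) (hF : IsCompletedNaturalFiltration P X F)
    (hfComp : ComparisonCondition P F X fun ω t _ z => f ω t z)
    {ω₀ : Ω} (hA : 0 < P (pathAtom X t ω₀)) (z z' : Fin N → ℝ) :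
    ∃ i, 0 < P (nextEq X t i ∩ pathAtom X t ω₀) ∧
      ∀ᵐ ω ∂P.restrict (pathAtom X t ω₀),
        dotR (z - z') (e N i - atomProb P X t ω₀) ≤ f ω t z - f ω t z' := by
  set jumps := {r : ℝ | ∃ i, 0 < P (nextEq X t i ∩ pathAtom X t ω₀) ∧
    r = dotR (z - z') (e N i - atomProb P X t ω₀)}
  have hfin : jumps.Finite :=
    (Set.finite_range fun i => dotR (z - z') (e N i - atomProb P X t ω₀)).subset
      fun r ⟨i, _, hr⟩ => ⟨i, hr.symm⟩
  have hne : jumps.Nonempty := by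
    obtain ⟨ω, hωA, hω⟩ := Measure.exists_mem_of_measure_ne_zero_of_ae hA.ne'
      (ae_restrict_of_ae (ae_forall_mem_imp_measure_pos P fun i => nextEq X t i ∩ pathAtom X t ω₀))
    obtain ⟨i, hi⟩ := hX (t + 1) ω
    exact ⟨_, i, hω i ⟨hi, hωA⟩, rfl⟩
  obtain ⟨i, hi, hmin⟩ := hne.csInf_mem hfin
  refine ⟨i, hi, ?_⟩
  have hcomp := (ae_restrict_iff' (measurableSet_pathAtom hF t ω₀)).2 (hfComp t 0 z z' ω₀ hA)
  filter_upwards [hcomp, condExp_X_succ_ae_eq_atomProb hX hF t ω₀] with ω hω hp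
  have hjump : minJump P F X t ω₀ z z' ω = sInf jumps := by
    simp only [minJump, hp]
    rfl
  rw [← hmin, ← hjump]
  rcases eq_or_ne (minJump P F X t ω₀ z z' ω) 0 with h0 | h0
  · exact (hω.1 h0).symm ▸ h0.le
  · exact (hω.2 h0).le

lemma IsDiscountedStep.ae_restrict_pathAtom (hX : BasisValued X)
    (hF : IsCompletedNaturalFiltration P X F) {Y₀ Y₁ : Ω → ℝ} {Z : Ω → Fin N → ℝ}
    (h : IsDiscountedStep P F X α f t Y₀ Z Y₁) {ω₀ : Ω} {y : ℝ} {z : Fin N → ℝ}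
    (hy : ∀ᵐ ω ∂P.restrict (pathAtom X t ω₀), Y₀ ω = y)
    (hz : ∀ᵐ ω ∂P.restrict (pathAtom X t ω₀), Z ω = z) :
    ∀ᵐ ω ∂P.restrict (pathAtom X t ω₀),
      Y₁ ω = (1 + α) * y - f ω t z + dotR z (X (t + 1) ω - atomProb P X t ω₀) := by
  filter_upwards [ae_restrict_of_ae h, hy, hz, Mdiff_ae_eq_on_pathAtom hX hF t ω₀]
    with ω h1 h2 h3 h4
  rw [h1, h2, h3, h4]

theorem abs_sub_le_div_of_isDiscountedStep (hX : BasisValued X)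
    (hF : IsCompletedNaturalFiltration P X F) (hα : 0 < 1 + α)
    (hfComp : ComparisonCondition P F X fun ω t _ z => f ω t z)
    {Y₀ Y₀' Y₁ Y₁' : Ω → ℝ} {Z Z' : Ω → Fin N → ℝ}
    (hY₀ : Measurable[F t] Y₀) (hY₀' : Measurable[F t] Y₀')
    (hZ : Measurable[F t] Z) (hZ' : Measurable[F t] Z')
    (h : IsDiscountedStep P F X α f t Y₀ Z Y₁) (h' : IsDiscountedStep P F X α f t Y₀' Z' Y₁')
    {D : ℝ} (hD : ∀ᵐ ω ∂P, |Y₁ ω - Y₁' ω| ≤ D) :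
    ∀ᵐ ω ∂P, |Y₀ ω - Y₀' ω| ≤ D / (1 + α) := by
  refine ae_of_forall_ae_restrict_pathAtom hX t fun ω₀ hA => ?_
  set p := atomProb P X t ω₀
  obtain ⟨y, hy⟩ := exists_ae_eq_const_on_pathAtom hF hY₀ ω₀
  obtain ⟨y', hy'⟩ := exists_ae_eq_const_on_pathAtom hF hY₀' ω₀
  obtain ⟨z, hz⟩ := exists_ae_eq_const_vec_on_pathAtom hF hZ ω₀
  obtain ⟨z', hz'⟩ := exists_ae_eq_const_vec_on_pathAtom hF hZ' ω₀
  have hdiff : ∀ᵐ ω ∂P.restrict (pathAtom X t ω₀), |Y₁ ω - Y₁' ω| ≤ D ∧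
      Y₁ ω - Y₁' ω = (1 + α) * (y - y') - (f ω t z - f ω t z')
        + dotR (z - z') (X (t + 1) ω - p) := by
    filter_upwards [ae_restrict_of_ae hD, h.ae_restrict_pathAtom hX hF hy hz,
      h'.ae_restrict_pathAtom hX hF hy' hz'] with ω hω h1 h2
    refine ⟨hω, ?_⟩
    simp only [h1, h2, dotR_eq_dotProduct, sub_dotProduct]
    ring
  -- evaluate along the transitions realising the comparison bounds in both directions
  obtain ⟨i, hi, hfi⟩ := exists_jump_le_driver_sub hX hF hfComp hA z z'
  obtain ⟨j, hj, hfj⟩ := exists_jump_le_driver_sub hX hF hfComp hA z' z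
  obtain ⟨ωi, hXi, ⟨hDi, hωi⟩, hfωi⟩ := exists_nextEq_of_ae_restrict_pathAtom hi (hdiff.and hfi)
  obtain ⟨ωj, hXj, ⟨hDj, hωj⟩, hfωj⟩ := exists_nextEq_of_ae_restrict_pathAtom hj (hdiff.and hfj)
  rw [hXi] at hωi
  rw [hXj] at hωj
  have hswap : dotR (z' - z) (e N j - p) = -dotR (z - z') (e N j - p) := by
    simp only [dotR_eq_dotProduct, ← neg_sub z z', neg_dotProduct]
  have hlow : -D ≤ (1 + α) * (y - y') := by linarith [(abs_le.1 hDi).1]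
  have hup : (1 + α) * (y - y') ≤ D := by linarith [(abs_le.1 hDj).2]
  filter_upwards [hy, hy'] with ω h1 h2
  rw [h1, h2, le_div_iff₀ hα, ← abs_of_pos hα, ← abs_mul, mul_comm]
  exact abs_le.2 ⟨hlow, hup⟩

theorem dotR_Mdiff_ae_eq_zero (hX : BasisValued X) (hF : IsCompletedNaturalFiltration P X F)
    {Z : Ω → Fin N → ℝ} (hZ : Measurable[F t] Z) {g : Ω → ℝ} (hg : Measurable[F t] g)
    (h : ∀ᵐ ω ∂P, dotR (Z ω) (Mdiff P F X t ω) = g ω) :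
    ∀ᵐ ω ∂P, dotR (Z ω) (Mdiff P F X t ω) = 0 := by
  refine ae_of_forall_ae_restrict_pathAtom hX t fun ω₀ hA => ?_
  set p := atomProb P X t ω₀
  obtain ⟨z, hz⟩ := exists_ae_eq_const_vec_on_pathAtom hF hZ ω₀
  obtain ⟨c, hc⟩ := exists_ae_eq_const_on_pathAtom hF hg ω₀
  have hjump : ∀ᵐ ω ∂P.restrict (pathAtom X t ω₀), dotR z (X (t + 1) ω - p) = c := by
    filter_upwards [ae_restrict_of_ae h, hz, hc, Mdiff_ae_eq_on_pathAtom hX hF t ω₀]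
      with ω h1 h2 h3 h4
    rw [← h2, ← h4, h1, h3]
  -- the jumps weighted by their probabilities average to zero
  have hc0 : c = 0 := by
    have hterm : ∀ i, p i * c = p i * dotR z (e N i - p) := fun i => by
      rcases eq_zero_or_pos (P (nextEq X t i ∩ pathAtom X t ω₀)) with h0 | hpos
      · simp [p, atomProb_eq_zero h0]
      · obtain ⟨ω, hXω, hω⟩ := exists_nextEq_of_ae_restrict_pathAtom hpos hjump
        rw [← hω, hXω]
    calc c = ∑ i, p i * c := by rw [← Finset.sum_mul, sum_atomProb hX hF hA, one_mul]
      _ = ∑ i, p i * dotR z (e N i - p) := Finset.sum_congr rfl fun i _ => hterm i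
      _ = 0 := sum_mul_dotR_e_sub_eq_zero (sum_atomProb hX hF hA) z
  filter_upwards [ae_restrict_of_ae h, hc] with ω h1 h2
  rw [h1, h2, hc0]

lemma condExp_indicator_nextEq_ae_eq (hF : IsCompletedNaturalFiltration P X F)
    {Y₁ : Ω → ℝ} (hint : Integrable Y₁ P) {ω₀ : Ω} {i : Fin N} {c : ℝ}
    (hc : ∀ᵐ ω ∂P.restrict (nextEq X t i ∩ pathAtom X t ω₀), Y₁ ω = c) :
    ∀ᵐ ω ∂P.restrict (pathAtom X t ω₀),
      (P[(nextEq X t i).indicator Y₁|F t]) ω = c * atomProb P X t ω₀ i := by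
  filter_upwards [condExp_ae_eq_setAverage_on_pathAtom hF
    (hint.indicator (measurableSet_nextEq hF t i)) ω₀] with ω hω
  rw [hω, setAverage_eq, setIntegral_indicator (measurableSet_nextEq hF t i), Set.inter_comm,
    integral_congr_ae hc, setIntegral_const, smul_eq_mul, smul_eq_mul, atomProb]
  ring

lemma condExp_ae_eq_sum_on_pathAtom (hX : BasisValued X)
    (hF : IsCompletedNaturalFiltration P X F) {Y₁ : Ω → ℝ} (hint : Integrable Y₁ P) {ω₀ : Ω}
    {c : Fin N → ℝ} (hc : ∀ i, ∀ᵐ ω ∂P.restrict (nextEq X t i ∩ pathAtom X t ω₀), Y₁ ω = c i) :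
    ∀ᵐ ω ∂P.restrict (pathAtom X t ω₀),
      (P[Y₁|F t]) ω = ∑ i, c i * atomProb P X t ω₀ i := by
  have hsum : P[Y₁|F t] =ᵐ[P] ∑ i, P[(nextEq X t i).indicator Y₁|F t] := by
    have hY : Y₁ = ∑ i, (nextEq X t i).indicator Y₁ :=
      funext fun ω => by rw [Finset.sum_apply, sum_indicator_nextEq hX]
    nth_rw 1 [hY]
    exact condExp_finsetSum (fun i _ => hint.indicator (measurableSet_nextEq hF t i)) _
  filter_upwards [ae_restrict_of_ae hsum,
    ae_all_iff.2 fun i => condExp_indicator_nextEq_ae_eq hF hint (hc i)] with ω h1 h2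
  rw [h1, Finset.sum_apply]
  exact Finset.sum_congr rfl fun i _ => h2 i

theorem dotR_repZ_Mdiff_ae_eq (hX : BasisValued X) (hF : IsCompletedNaturalFiltration P X F)
    {Y₁ : Ω → ℝ} (hY₁ : Measurable[F (t + 1)] Y₁) (hint : Integrable Y₁ P) :
    ∀ᵐ ω ∂P, dotR (repZ P F X Y₁ t ω) (Mdiff P F X t ω) = Y₁ ω - (P[Y₁|F t]) ω := by
  refine ae_of_forall_ae_restrict_pathAtom hX t fun ω₀ _ => ?_
  set p := atomProb P X t ω₀
  choose c hc using exists_ae_eq_const_on_nextEq_inter_pathAtom hF hY₁ ω₀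
  have hZ : ∀ᵐ ω ∂P.restrict (pathAtom X t ω₀), ∀ i, repZ P F X Y₁ t ω i = c i * p i / p i := by
    filter_upwards [condExp_X_succ_ae_eq_atomProb hX hF t ω₀,
      ae_all_iff.2 fun i => condExp_indicator_nextEq_ae_eq hF hint (hc i)] with ω h1 h2 i
    simp only [repZ, h1 i, h2 i, p]
  have hY : ∀ᵐ ω ∂P, ∀ i, ω ∈ nextEq X t i ∩ pathAtom X t ω₀ →
      0 < P (nextEq X t i ∩ pathAtom X t ω₀) ∧ Y₁ ω = c i := by
    filter_upwards [ae_forall_mem_imp_measure_pos P fun i => nextEq X t i ∩ pathAtom X t ω₀,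
      ae_all_iff.2 fun i => (ae_restrict_iff' ((measurableSet_nextEq hF t i).inter
        (measurableSet_pathAtom hF t ω₀))).1 (hc i)] with ω h1 h2 i hi
    exact ⟨h1 i hi, h2 i hi⟩
  filter_upwards [hZ, ae_restrict_of_ae hY, Mdiff_ae_eq_on_pathAtom hX hF t ω₀,
    condExp_ae_eq_sum_on_pathAtom hX hF hint hc,
    ae_restrict_mem (measurableSet_pathAtom hF t ω₀)] with ω hZω hYω hM hE hmem
  obtain ⟨k, hk⟩ := hX (t + 1) ω
  obtain ⟨hpos, hYk⟩ := hYω k ⟨hk, hmem⟩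
  rw [hM, hk, hYk, hE, dotR_eq_dotProduct, dotProduct_sub, e, dotProduct_single, mul_one,
    dotProduct, hZω, mul_div_cancel_right₀ _ (atomProb_pos hpos).ne']
  simp only [hZω]
  congr 1
  exact Finset.sum_congr rfl fun i _ => div_mul_cancel_of_imp fun h => by simp [h]

lemma isDiscountedStep_repZ (hX : BasisValued X) (hF : IsCompletedNaturalFiltration P X F)
    (hα : 1 + α ≠ 0) {Y₁ : Ω → ℝ} (hY₁ : Measurable[F (t + 1)] Y₁)
    (hint : Integrable Y₁ P) :
    IsDiscountedStep P F X α f t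
      (fun ω => ((P[Y₁|F t]) ω + f ω t (repZ P F X Y₁ t ω)) / (1 + α)) (repZ P F X Y₁ t) Y₁ := by
  filter_upwards [dotR_repZ_Mdiff_ae_eq hX hF hY₁ hint] with ω hω
  rw [hω]
  field_simp
  ring

lemma abs_le_of_isDiscountedStep (hX : BasisValued X) (hF : IsCompletedNaturalFiltration P X F)
    (hα : 0 < 1 + α) (hfComp : ComparisonCondition P F X fun ω t _ z => f ω t z)
    (hfBdd : ∀ (ω : Ω) (t : ℕ), |f ω t 0| ≤ C) {Y₀ Y₁ : Ω → ℝ}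
    {Z : Ω → Fin N → ℝ} (hY₀ : Measurable[F t] Y₀) (hZ : Measurable[F t] Z)
    (h : IsDiscountedStep P F X α f t Y₀ Z Y₁) {D : ℝ} (hD : ∀ᵐ ω ∂P, |Y₁ ω| ≤ D) :
    ∀ᵐ ω ∂P, |Y₀ ω| ≤ (D + C) / (1 + α) := by
  have h0 : IsDiscountedStep P F X α f t (fun _ => 0) (fun _ => 0) fun ω => -f ω t 0 :=
    Eventually.of_forall fun ω => by simp [dotR]
  have hD' : ∀ᵐ ω ∂P, |Y₁ ω - -f ω t 0| ≤ D + C := hD.mono fun ω hω => by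
    rw [sub_neg_eq_add]
    exact (abs_add_le _ _).trans (add_le_add hω (hfBdd ω t))
  simpa using abs_sub_le_div_of_isDiscountedStep hX hF hα hfComp hY₀ measurable_const hZ
    measurable_const h h0 hD'

lemma abs_sub_le_div_pow_of_isDiscountedStep (hX : BasisValued X)
    (hF : IsCompletedNaturalFiltration P X F) (hα : 0 < 1 + α)
    (hfComp : ComparisonCondition P F X fun ω t _ z => f ω t z) {Y Y' : ℕ → Ω → ℝ}
    {Z Z' : ℕ → Ω → Fin N → ℝ} (hY : Adapted F Y) (hY' : Adapted F Y') (hZ : Adapted F Z)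
    (hZ' : Adapted F Z') {k : ℕ}
    (h : ∀ s, t ≤ s → s < t + k → IsDiscountedStep P F X α f s (Y s) (Z s) (Y (s + 1)))
    (h' : ∀ s, t ≤ s → s < t + k → IsDiscountedStep P F X α f s (Y' s) (Z' s) (Y' (s + 1)))
    {D : ℝ} (hD : ∀ᵐ ω ∂P, |Y (t + k) ω - Y' (t + k) ω| ≤ D) :
    ∀ᵐ ω ∂P, |Y t ω - Y' t ω| ≤ D / (1 + α) ^ k := by
  induction k generalizing t with
  | zero => simpa using hD
  | succ k ih =>
    have hnext := ih (t := t + 1) (fun s hs hs' => h s (by omega) (by omega))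
      (fun s hs hs' => h' s (by omega) (by omega)) (by rwa [show t + 1 + k = t + (k + 1) by omega])
    filter_upwards [abs_sub_le_div_of_isDiscountedStep hX hF hα hfComp (hY t) (hY' t) (hZ t)
      (hZ' t) (h t le_rfl (by omega)) (h' t le_rfl (by omega)) hnext] with ω hω
    rwa [pow_succ, ← div_div]

lemma abs_le_of_solvesFiniteBSDE (hX : BasisValued X) (hF : IsCompletedNaturalFiltration P X F)
    (hα : 0 < α) (hfComp : ComparisonCondition P F X fun ω t _ z => f ω t z) (hC : 0 ≤ C)
    (hfBdd : ∀ (ω : Ω) (t : ℕ), |f ω t 0| ≤ C) {T : ℕ} {Y : ℕ → Ω → ℝ}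
    {Z : ℕ → Ω → Fin N → ℝ}
    (h : SolvesFiniteBSDE P F X (fun ω u y z => f ω u z - α * y) T (fun _ => 0) Y Z)
    (ht : t ≤ T) : ∀ᵐ ω ∂P, |Y t ω| ≤ C / α := by
  induction ht using Nat.decreasingInduction with
  | self =>
    filter_upwards [h.ae_eq_terminal] with ω hω
    rw [hω, abs_zero]
    positivity
  | of_succ t ht ih =>
    have := abs_le_of_isDiscountedStep hX hF (by linarith) hfComp hfBdd (h.1 t) (h.2.1 t)
      (h.isDiscountedStep ht) ih
    rwa [show (C / α + C) / (1 + α) = C / α by field_simp] at this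

lemma abs_sub_le_of_solvesFiniteBSDE (hX : BasisValued X)
    (hF : IsCompletedNaturalFiltration P X F) (hα : 0 < α)
    (hfComp : ComparisonCondition P F X fun ω t _ z => f ω t z) (hC : 0 ≤ C)
    (hfBdd : ∀ (ω : Ω) (t : ℕ), |f ω t 0| ≤ C) {T : ℕ} {Y : ℕ → Ω → ℝ}
    {Z : ℕ → Ω → Fin N → ℝ}
    (h : SolvesFiniteBSDE P F X (fun ω u y z => f ω u z - α * y) T (fun _ => 0) Y Z)
    {T' : ℕ} {Y' : ℕ → Ω → ℝ} {Z' : ℕ → Ω → Fin N → ℝ}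
    (h' : SolvesFiniteBSDE P F X (fun ω u y z => f ω u z - α * y) T' (fun _ => 0) Y' Z')
    (htT : t ≤ T) (hTT' : T ≤ T') :
    ∀ᵐ ω ∂P, |Y' t ω - Y t ω| ≤ C / α / (1 + α) ^ (T - t) := by
  obtain ⟨k, rfl⟩ := Nat.exists_eq_add_of_le htT
  rw [Nat.add_sub_cancel_left]
  refine abs_sub_le_div_pow_of_isDiscountedStep hX hF (by linarith) hfComp h'.1 h.1 h'.2.1 h.2.1
    (fun s _ hs => h'.isDiscountedStep (by omega)) (fun s _ hs => h.isDiscountedStep hs) ?_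
  filter_upwards [abs_le_of_solvesFiniteBSDE hX hF hα hfComp hC hfBdd h' hTT', h.ae_eq_terminal]
    with ω h1 h2
  rwa [h2, sub_zero]

lemma abs_sub_limUnder_le_of_solvesFiniteBSDE (hX : BasisValued X)
    (hF : IsCompletedNaturalFiltration P X F) (hα : 0 < α)
    (hfComp : ComparisonCondition P F X fun ω t _ z => f ω t z) (hC : 0 ≤ C)
    (hfBdd : ∀ (ω : Ω) (t : ℕ), |f ω t 0| ≤ C)
    (hYT : ∀ T : ℕ, SolvesFiniteBSDE P F X (fun ω u y z => f ω u z - α * y) T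
      (fun _ => 0) (YT T) (ZT T)) (t : ℕ) :
    ∀ᵐ ω ∂P, ∀ T, t ≤ T →
      |YT T t ω - limUnder atTop (fun T => YT T t ω)| ≤ C / α / (1 + α) ^ (T - t) := by
  have hcauchy : ∀ᵐ ω ∂P, ∀ T T', t ≤ T → T ≤ T' →
      |YT T' t ω - YT T t ω| ≤ C / α / (1 + α) ^ (T - t) := by
    refine ae_all_iff.2 fun T => ae_all_iff.2 fun T' => ?_
    by_cases hT : t ≤ T ∧ T ≤ T'
    · filter_upwards [abs_sub_le_of_solvesFiniteBSDE hX hF hα hfComp hC hfBdd (hYT T) (hYT T')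
        hT.1 hT.2] with ω hω _ _
      exact hω
    · exact Eventually.of_forall fun _ h1 h2 => absurd ⟨h1, h2⟩ hT
  filter_upwards [hcauchy] with ω hω T hT
  exact abs_sub_limUnder_le hω ((tendsto_div_pow_atTop_zero hα _).comp (tendsto_sub_atTop_nat t)) hT

lemma isDiscountedStep_of_approx (hX : BasisValued X) (hF : IsCompletedNaturalFiltration P X F)
    (hα : 0 < α)
    (hfAd : ∀ t : ℕ, Measurable[(F t).prod inferInstance]
      fun p : Ω × (Fin N → ℝ) => f p.1 t p.2)
    (hfComp : ComparisonCondition P F X fun ω t _ z => f ω t z) (hC : 0 ≤ C)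
    (hYT : ∀ T : ℕ, SolvesFiniteBSDE P F X (fun ω u y z => f ω u z - α * y) T
      (fun _ => 0) (YT T) (ZT T))
    {Y : ℕ → Ω → ℝ} (hY : Adapted F Y)
    (happrox : ∀ t, ∀ᵐ ω ∂P, ∀ T, t ≤ T → |YT T t ω - Y t ω| ≤ C / α / (1 + α) ^ (T - t))
    (hbdd : ∀ t, ∀ᵐ ω ∂P, |Y t ω| ≤ C / α) (t : ℕ) :
    IsDiscountedStep P F X α f t (Y t) (repZ P F X (Y (t + 1)) t) (Y (t + 1)) := by
  have hint : Integrable (Y (t + 1)) P :=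
    .of_bound ((hY (t + 1)).mono (F.le _) le_rfl).aestronglyMeasurable (C / α)
      ((hbdd (t + 1)).mono fun ω h => by rwa [Real.norm_eq_abs])
  set Y₀ := fun ω => ((P[Y (t + 1)|F t]) ω + f ω t (repZ P F X (Y (t + 1)) t ω)) / (1 + α)
  have hstep := isDiscountedStep_repZ (f := f) hX hF (by positivity) (hY (t + 1)) hint
  have hY₀ : Measurable[F t] Y₀ := (stronglyMeasurable_condExp.measurable.add
    (measurable_driver_comp hfAd (measurable_repZ _))).div_const _
  -- both `Y t` and `Y₀` are limits of `YT T t`, by the approximation and by contraction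
  have hclose : ∀ k : ℕ, ∀ᵐ ω ∂P, |Y t ω - Y₀ ω| ≤ 2 * (C / α / (1 + α) ^ k) := fun k => by
    have hnext : ∀ᵐ ω ∂P, |YT (t + 1 + k) (t + 1) ω - Y (t + 1) ω| ≤ C / α / (1 + α) ^ k :=
      (happrox (t + 1)).mono fun ω h => by simpa using h (t + 1 + k) (by omega)
    filter_upwards [happrox t, abs_sub_le_div_of_isDiscountedStep hX hF (by linarith) hfComp
      ((hYT _).1 t) hY₀ ((hYT _).2.1 t) (measurable_repZ _)
      ((hYT (t + 1 + k)).isDiscountedStep (by omega)) hstep hnext] with ω h1 h2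
    calc |Y t ω - Y₀ ω|
        ≤ |YT (t + 1 + k) t ω - Y t ω| + |YT (t + 1 + k) t ω - Y₀ ω| := by
          rw [abs_sub_comm (YT _ t ω)]
          exact abs_sub_le _ _ _
      _ ≤ C / α / (1 + α) ^ k + C / α / (1 + α) ^ k := by
          gcongr
          · exact (h1 _ (by omega)).trans
              (div_pow_le_div_pow hα.le (by positivity) (by omega))
          · exact h2.trans (div_le_self (by positivity) (by linarith))
      _ = 2 * (C / α / (1 + α) ^ k) := by ring
  have hY₀eq : Y t =ᵐ[P] Y₀ := by
    filter_upwards [ae_all_iff.2 hclose] with ω hω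
    exact eq_of_eventually_abs_sub_le (by simpa using (tendsto_div_pow_atTop_zero hα _).const_mul 2)
      (Eventually.of_forall hω)
  filter_upwards [hstep, hY₀eq] with ω h1 h2
  rwa [h2]

lemma ae_eq_of_solvesDiscountedBSDE (hX : BasisValued X)
    (hF : IsCompletedNaturalFiltration P X F) (hα : 0 < α)
    (hfComp : ComparisonCondition P F X fun ω t _ z => f ω t z) {Y Y' : ℕ → Ω → ℝ}
    {Z Z' : ℕ → Ω → Fin N → ℝ} (h : SolvesDiscountedBSDE P F X α f Y Z)
    (h' : SolvesDiscountedBSDE P F X α f Y' Z') {D D' : ℝ} (hD : ∀ t, ∀ᵐ ω ∂P, |Y t ω| ≤ D)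
    (hD' : ∀ t, ∀ᵐ ω ∂P, |Y' t ω| ≤ D') (t : ℕ) : Y t =ᵐ[P] Y' t := by
  have hk : ∀ k : ℕ, ∀ᵐ ω ∂P, |Y t ω - Y' t ω| ≤ (D + D') / (1 + α) ^ k := fun k =>
    abs_sub_le_div_pow_of_isDiscountedStep hX hF (by linarith) hfComp h.1 h'.1 h.2.1 h'.2.1
      (fun s _ _ => h.isDiscountedStep s) (fun s _ _ => h'.isDiscountedStep s)
      (((hD _).and (hD' _)).mono fun _ h => (abs_sub _ _).trans (add_le_add h.1 h.2))
  filter_upwards [ae_all_iff.2 hk] with ω hω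
  exact eq_of_eventually_abs_sub_le (tendsto_div_pow_atTop_zero hα _) (Eventually.of_forall hω)

lemma equivM_of_solvesDiscountedBSDE (hX : BasisValued X)
    (hF : IsCompletedNaturalFiltration P X F)
    (hfAd : ∀ t : ℕ, Measurable[(F t).prod inferInstance]
      fun p : Ω × (Fin N → ℝ) => f p.1 t p.2)
    {Y Y' : ℕ → Ω → ℝ} {Z Z' : ℕ → Ω → Fin N → ℝ} (h : SolvesDiscountedBSDE P F X α f Y Z)
    (h' : SolvesDiscountedBSDE P F X α f Y' Z') (hY : ∀ t, Y t =ᵐ[P] Y' t) :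
    equivM P F X Z Z' := fun t => by
  have hdot : ∀ᵐ ω ∂P, dotR ((Z t - Z' t) ω) (Mdiff P F X t ω)
      = f ω t (Z t ω) - f ω t (Z' t ω) := by
    filter_upwards [h.isDiscountedStep t, h'.isDiscountedStep t, hY t, hY (t + 1)]
      with ω h1 h2 h3 h4
    simp only [Pi.sub_apply, dotR_eq_dotProduct, sub_dotProduct] at h1 h2 ⊢
    rw [h3, h4] at h1
    linarith
  have hzero := dotR_Mdiff_ae_eq_zero hX hF ((h.2.1 t).sub (h'.2.1 t))
    ((measurable_driver_comp hfAd (h.2.1 t)).sub (measurable_driver_comp hfAd (h'.2.1 t))) hdot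
  calc seminormSq P F X t (fun ω => Z t ω - Z' t ω)
      =ᵐ[P] P[0|F t] := condExp_congr_ae (hzero.mono fun ω hω => by
        simp only [Pi.sub_apply] at hω
        simp [hω])
    _ = 0 := condExp_zero

end FiniteMeasure

end Development

theorem discounted_BSDE_exists_unique_general
    {Ω : Type*} {mΩ : MeasurableSpace Ω} {N : ℕ}
    (P : Measure Ω) [IsProbabilityMeasure P] (F : Filtration ℕ mΩ)
    (X : ℕ → Ω → (Fin N → ℝ)) (hX : BasisValued X)
    (hF : IsCompletedNaturalFiltration P X F)
    (α : ℝ) (hα : 0 < α)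
    (f : Ω → ℕ → (Fin N → ℝ) → ℝ)
    (hfAd : ∀ t : ℕ, Measurable[(F t).prod inferInstance]
      fun p : Ω × (Fin N → ℝ) => f p.1 t p.2)
    (hfComp : ComparisonCondition P F X fun ω t _ z => f ω t z)
    (C : ℝ) (hC : 0 < C) (hfBdd : ∀ (ω : Ω) (t : ℕ), |f ω t 0| ≤ C)
    (YT : ℕ → ℕ → Ω → ℝ) (ZT : ℕ → ℕ → Ω → Fin N → ℝ)
    (hYT : ∀ T : ℕ, SolvesFiniteBSDE P F X (fun ω u y z => f ω u z - α * y) T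
      (fun _ => 0) (YT T) (ZT T)) :
    ∃ (Y : ℕ → Ω → ℝ) (Z : ℕ → Ω → Fin N → ℝ),
      SolvesDiscountedBSDE P F X α f Y Z ∧
      (∀ t : ℕ, ∀ᵐ ω ∂P, |Y t ω| ≤ C / α) ∧
      (∀ (Y' : ℕ → Ω → ℝ) (Z' : ℕ → Ω → Fin N → ℝ),
        SolvesDiscountedBSDE P F X α f Y' Z' →
        (∃ D : ℝ, ∀ t : ℕ, ∀ᵐ ω ∂P, |Y' t ω| ≤ D) →
        (∀ t : ℕ, Y t =ᵐ[P] Y' t) ∧ equivM P F X Z Z') ∧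
      ∀ t₀ : ℕ, ∀ ε : ℝ, 0 < ε → ∃ T₀ : ℕ, ∀ T ≥ T₀, ∀ t ≤ t₀,
        eLpNorm (fun ω => YT T t ω - Y t ω) ⊤ P ≤ ENNReal.ofReal ε := by
  set Y : ℕ → Ω → ℝ := fun t ω => limUnder atTop fun T => YT T t ω
  have hY : Adapted F Y := fun t =>
    (@StronglyMeasurable.limUnder ℕ Ω ℝ (F t) _ _ atTop _ _ _ _ fun T =>
      ((hYT T).1 t).stronglyMeasurable).measurable
  have happrox := abs_sub_limUnder_le_of_solvesFiniteBSDE hX hF hα hfComp hC.le hfBdd hYT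
  have hbdd : ∀ t, ∀ᵐ ω ∂P, |Y t ω| ≤ C / α := fun t => by
    filter_upwards [happrox t, (hYT t).ae_eq_terminal] with ω h1 h2
    simpa [h2] using h1 t le_rfl
  have hsol : SolvesDiscountedBSDE P F X α f Y fun t => repZ P F X (Y (t + 1)) t :=
    solvesDiscountedBSDE_of_isDiscountedStep hY (fun t => measurable_repZ _)
      (isDiscountedStep_of_approx hX hF hα hfAd hfComp hC.le hYT hY happrox hbdd)
  refine ⟨Y, _, hsol, hbdd, fun Y' Z' hsol' ⟨D, hD⟩ => ?_, fun t₀ ε hε => ?_⟩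
  · have hYY' := ae_eq_of_solvesDiscountedBSDE hX hF hα hfComp hsol hsol' hbdd hD
    exact ⟨hYY', equivM_of_solvesDiscountedBSDE hX hF hfAd hsol hsol' hYY'⟩
  · obtain ⟨n, hn⟩ := ((tendsto_div_pow_atTop_zero hα (C / α)).eventually (gt_mem_nhds hε)).exists
    refine ⟨t₀ + n, fun T hT t ht => ?_⟩
    rw [eLpNorm_exponent_top]
    refine (eLpNormEssSup_le_of_ae_bound ((happrox t).mono fun ω hω => ?_)).trans
      (ENNReal.ofReal_le_ofReal hn.le)
    rw [Real.norm_eq_abs]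
    exact (hω T (by omega)).trans (div_pow_le_div_pow hα.le (by positivity) (by omega))

/-- **Discounted BSDE: existence, uniqueness and approximation** by finite-horizon
solutions. -/
theorem discounted_BSDE_exists_unique
    {Ω : Type*} {mΩ : MeasurableSpace Ω} {N : ℕ}
    (P : Measure Ω) [IsProbabilityMeasure P] (F : Filtration ℕ mΩ)
    (X : ℕ → Ω → (Fin N → ℝ)) (hX : BasisValued X)
    (hF : IsCompletedNaturalFiltration P X F)
    (α : ℝ) (hα : 0 < α)
    (f : Ω → ℕ → (Fin N → ℝ) → ℝ)
    (hfAd : ∀ t : ℕ, Measurable[(F t).prod inferInstance]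
      fun p : Ω × (Fin N → ℝ) => f p.1 t p.2)
    (L : ℝ) (hL : 0 < L) (hfLip : DriverLipschitzNoY P F X L f)
    (hfComp : ComparisonCondition P F X fun ω t _ z => f ω t z)
    (C : ℝ) (hC : 0 < C) (hfBdd : ∀ (ω : Ω) (t : ℕ), |f ω t 0| ≤ C)
    (YT : ℕ → ℕ → Ω → ℝ) (ZT : ℕ → ℕ → Ω → Fin N → ℝ)
    (hYT : ∀ T : ℕ, SolvesFiniteBSDE P F X (fun ω u y z => f ω u z - α * y) T
      (fun _ => 0) (YT T) (ZT T)) :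
    ∃ (Y : ℕ → Ω → ℝ) (Z : ℕ → Ω → Fin N → ℝ),
      SolvesDiscountedBSDE P F X α f Y Z ∧
      (∀ t : ℕ, ∀ᵐ ω ∂P, |Y t ω| ≤ C / α) ∧
      (∀ (Y' : ℕ → Ω → ℝ) (Z' : ℕ → Ω → Fin N → ℝ),
        SolvesDiscountedBSDE P F X α f Y' Z' →
        (∃ D : ℝ, ∀ t : ℕ, ∀ᵐ ω ∂P, |Y' t ω| ≤ D) →
        (∀ t : ℕ, Y t =ᵐ[P] Y' t) ∧ equivM P F X Z Z') ∧
      ∀ t₀ : ℕ, ∀ ε : ℝ, 0 < ε → ∃ T₀ : ℕ, ∀ T ≥ T₀, ∀ t ≤ t₀,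
        eLpNorm (fun ω => YT T t ω - Y t ω) ⊤ P ≤ ENNReal.ofReal ε :=
  discounted_BSDE_exists_unique_general P F X hX hF α hα f hfAd hfComp C hC hfBdd YT ZT hYT

end DiscreteEBSDE
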